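/- Let f : ℝ → ℝ be a probability density of delay with finite expectation E₁ = ∫₀^∞ τ f(τ) dτ, let a₁,…,a₅ be real constants, and let ω₁ > 0 with a₃² + a₄²ω₁² ≠ 0. If λ = iω₁ is a root of the characteristic function χ(λ) = λ³ + a₁λ² + a₂λ + (a₃ + a₄λ)∫₀^∞ f(τ)e^{−λτ} dτ + a₅, then E₁ ≥ π·[a₃² + a₄²ω₁² + a₃a₅ − ω₁²(a₄ω₁² + a₁a₃ − a₂a₄)] / (c*·ω₁·(a₃² + a₄²ω₁²)), where c* = sSup {k ∈ ℝ | there exists x > 0 with cos x = 1 − kx/π}. -/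

import Mathlib

/-!
Evaluating `χ(iω₁) = 0` at real and imaginary parts gives two linear equations for
`C = ∫ f cos(ω₁τ)` and `S = ∫ f sin(ω₁τ)`; eliminating `S` pins `C` down as a rational
function of the coefficients. On the other hand `cos x ≥ 1 - c* x / π` for `x ≥ 0`, directly
from `c*` being a supremum of chord slopes, so integrating against the density gives
`C ≥ 1 - c* ω₁ E₁ / π`, which rearranges to the claimed lower bound on `E₁`.
-/

open MeasureTheory Set

/-- The rescaled chord slopes of `cos` at `0`, whose supremum is the constant `c*`. -/
def cosChordSlopes : Set ℝ := {k : ℝ | ∃ x > (0 : ℝ), Real.cos x = 1 - k * x / Real.pi}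

section CosChord

open Real

lemma pi_mul_one_sub_cos_div_mem_cosChordSlopes {x : ℝ} (hx : 0 < x) :
    π * (1 - cos x) / x ∈ cosChordSlopes :=
  ⟨x, hx, by field_simp; ring⟩

lemma one_sub_cos_le_self {x : ℝ} (hx : 0 ≤ x) : 1 - cos x ≤ x := by
  have := abs_cos_sub_cos_le x 0
  rw [cos_zero, sub_zero, abs_of_nonneg hx] at this
  linarith [neg_abs_le (cos x - 1)]

lemma bddAbove_cosChordSlopes : BddAbove cosChordSlopes := by
  refine ⟨π, ?_⟩
  rintro k ⟨x, hx, hcos⟩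
  have hkx : k * x = π * (1 - cos x) := by
    rw [hcos]; field_simp; ring
  have : k * x ≤ π * x := by
    rw [hkx]; exact mul_le_mul_of_nonneg_left (one_sub_cos_le_self hx.le) pi_pos.le
  exact le_of_mul_le_mul_right this hx

lemma two_le_sSup_cosChordSlopes : 2 ≤ sSup cosChordSlopes := by
  have h := le_csSup bddAbove_cosChordSlopes (pi_mul_one_sub_cos_div_mem_cosChordSlopes pi_pos)
  rwa [cos_pi, sub_neg_eq_add, one_add_one_eq_two, mul_div_cancel_left₀ _ pi_ne_zero] at h

lemma one_sub_sSup_cosChordSlopes_mul_le_cos {x : ℝ} (hx : 0 ≤ x) :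
    1 - sSup cosChordSlopes / π * x ≤ cos x := by
  rcases hx.eq_or_lt with rfl | hx
  · simp
  have h := le_csSup bddAbove_cosChordSlopes (pi_mul_one_sub_cos_div_mem_cosChordSlopes hx)
  rw [div_le_iff₀ hx] at h
  rw [div_mul_eq_mul_div, sub_le_comm, le_div_iff₀ pi_pos]
  linarith

end CosChord

lemma integral_ofReal_mul_exp_neg_I_mul {μ : Measure ℝ} {f : ℝ → ℝ} (hf : Integrable f μ)
    (ω : ℝ) :
    ∫ τ, (f τ : ℂ) * Complex.exp (-(Complex.I * ω) * τ) ∂μ =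
      ((∫ τ, f τ * Real.cos (ω * τ) ∂μ : ℝ) : ℂ) -
        ((∫ τ, f τ * Real.sin (ω * τ) ∂μ : ℝ) : ℂ) * Complex.I := by
  have hcos : Integrable (fun τ => f τ * Real.cos (ω * τ)) μ :=
    hf.mul_bdd (by fun_prop) (ae_of_all _ fun τ => by simpa using Real.abs_cos_le_one (ω * τ))
  have hsin : Integrable (fun τ => f τ * Real.sin (ω * τ)) μ :=
    hf.mul_bdd (by fun_prop) (ae_of_all _ fun τ => by simpa using Real.abs_sin_le_one (ω * τ))
  have hpt : ∀ τ : ℝ, (f τ : ℂ) * Complex.exp (-(Complex.I * ω) * τ) =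
      ((f τ * Real.cos (ω * τ) : ℝ) : ℂ) - ((f τ * Real.sin (ω * τ) : ℝ) : ℂ) * Complex.I := by
    intro τ
    rw [show -(Complex.I * ω) * τ = ((-(ω * τ) : ℝ) : ℂ) * Complex.I by push_cast; ring,
      Complex.exp_mul_I]
    push_cast
    rw [Complex.cos_neg, Complex.sin_neg]
    ring
  simp_rw [hpt]
  rw [integral_sub hcos.ofReal (hsin.ofReal.mul_const _),
    integral_mul_const, integral_complex_ofReal, integral_complex_ofReal]

lemma mul_re_eq_of_delay_char_root {a₁ a₂ a₃ a₄ a₅ ω C S : ℝ}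
    (h : (Complex.I * ω) ^ 3 + (a₁ : ℂ) * (Complex.I * ω) ^ 2 + (a₂ : ℂ) * (Complex.I * ω) +
      ((a₃ : ℂ) + (a₄ : ℂ) * (Complex.I * ω)) * ((C : ℂ) - (S : ℂ) * Complex.I) + (a₅ : ℂ) = 0) :
    (a₃ ^ 2 + a₄ ^ 2 * ω ^ 2) * C = a₄ * ω ^ 4 + (a₁ * a₃ - a₂ * a₄) * ω ^ 2 - a₃ * a₅ := by
  have hre := congrArg Complex.re h
  have him := congrArg Complex.im h
  simp only [pow_succ, pow_zero, one_mul, Complex.add_re, Complex.add_im, Complex.mul_re,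
    Complex.mul_im, Complex.sub_re, Complex.sub_im, Complex.I_re, Complex.I_im,
    Complex.ofReal_re, Complex.ofReal_im, Complex.zero_re, Complex.zero_im] at hre him
  linear_combination a₃ * hre + a₄ * ω * him

lemma setIntegral_sub_mul_integral_mul_le_integral_mul_cos {f : ℝ → ℝ} {k ω : ℝ}
    (hk : ∀ x ≥ 0, 1 - k * x ≤ Real.cos x) (hω : 0 ≤ ω)
    (hf : IntegrableOn f (Ioi 0)) (hf_nonneg : ∀ τ ≥ 0, 0 ≤ f τ)
    (hτf : IntegrableOn (fun τ => τ * f τ) (Ioi 0)) :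
    (∫ τ in Ioi 0, f τ) - k * ω * ∫ τ in Ioi 0, τ * f τ ≤
      ∫ τ in Ioi 0, f τ * Real.cos (ω * τ) := by
  rw [← integral_const_mul, ← integral_sub hf (hτf.const_mul _)]
  refine setIntegral_mono_on (hf.sub (hτf.const_mul _))
    (hf.mul_bdd (by fun_prop) (ae_of_all _ fun τ => by simpa using Real.abs_cos_le_one (ω * τ)))
    measurableSet_Ioi fun τ hτ => ?_
  have hcos := hk (ω * τ) (mul_nonneg hω (le_of_lt hτ))
  calc f τ - k * ω * (τ * f τ) = f τ * (1 - k * (ω * τ)) := by ring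
    _ ≤ f τ * Real.cos (ω * τ) := mul_le_mul_of_nonneg_left hcos (hf_nonneg τ (le_of_lt hτ))

/-- Let `f : ℝ → ℝ` be a probability density of delay with finite
expectation `E₁ = ∫₀^∞ τ f(τ) dτ`, let `a₁,…,a₅` be real constants, and let
`ω₁ > 0` with `a₃² + a₄²ω₁² ≠ 0`. If `λ = iω₁` is a root of the characteristic
function `χ(λ) = λ³ + a₁λ² + a₂λ + (a₃ + a₄λ)∫₀^∞ f(τ)e^{−λτ} dτ + a₅`, then
`E₁ ≥ π·[a₃² + a₄²ω₁² + a₃a₅ − ω₁²(a₄ω₁² + a₁a₃ − a₂a₄)] / (c*·ω₁·(a₃² + a₄²ω₁²))`,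
where `c* = sSup {k ∈ ℝ | ∃ x > 0, cos x = 1 − kx/π}`. -/
theorem stmt_14 (f : ℝ → ℝ) (a₁ a₂ a₃ a₄ a₅ ω₁ E₁ c : ℝ) (χ : ℂ → ℂ)
    (hf_int : IntegrableOn f (Set.Ioi 0))
    (hf_nonneg : ∀ τ ≥ (0 : ℝ), 0 ≤ f τ)
    (hf_one : ∫ τ in Set.Ioi (0 : ℝ), f τ = 1)
    (hE_int : IntegrableOn (fun τ => τ * f τ) (Set.Ioi 0))
    (hE : E₁ = ∫ τ in Set.Ioi (0 : ℝ), τ * f τ)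
    (hω₁ : ω₁ > 0)
    (hne : a₃ ^ 2 + a₄ ^ 2 * ω₁ ^ 2 ≠ 0)
    (hχ : ∀ lam : ℂ, χ lam = lam ^ 3 + (a₁ : ℂ) * lam ^ 2 + (a₂ : ℂ) * lam +
      ((a₃ : ℂ) + (a₄ : ℂ) * lam) *
        (∫ τ in Set.Ioi (0 : ℝ), (f τ : ℂ) * Complex.exp (-lam * τ)) + (a₅ : ℂ))
    (hroot : χ (Complex.I * ω₁) = 0)
    (hc : c = sSup {k : ℝ | ∃ x > (0 : ℝ), Real.cos x = 1 - k * x / Real.pi}) :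
    E₁ ≥ Real.pi * (a₃ ^ 2 + a₄ ^ 2 * ω₁ ^ 2 + a₃ * a₅ -
        ω₁ ^ 2 * (a₄ * ω₁ ^ 2 + a₁ * a₃ - a₂ * a₄)) /
      (c * ω₁ * (a₃ ^ 2 + a₄ ^ 2 * ω₁ ^ 2)) := by
  rw [hχ, integral_ofReal_mul_exp_neg_I_mul hf_int] at hroot
  have hC := mul_re_eq_of_delay_char_root hroot
  have hbound := setIntegral_sub_mul_integral_mul_le_integral_mul_cos
    (fun x hx => hc ▸ one_sub_sSup_cosChordSlopes_mul_le_cos hx) hω₁.le hf_int hf_nonneg hE_int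
  rw [hf_one, ← hE] at hbound
  have hc_pos : 0 < c := hc ▸ two_pos.trans_le two_le_sSup_cosChordSlopes
  have hD : 0 < a₃ ^ 2 + a₄ ^ 2 * ω₁ ^ 2 := lt_of_le_of_ne (by positivity) hne.symm
  rw [ge_iff_le, div_le_iff₀ (by positivity)]
  rw [div_mul_eq_mul_div, div_mul_eq_mul_div, sub_le_comm, le_div_iff₀ Real.pi_pos] at hbound
  linarith [mul_le_mul_of_nonneg_right hbound hD.le, congrArg (· * Real.pi) hC]
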